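/- arXiv:2503.02634 — 4 statements merged into one kernel-verified Lean document; each statement's English description precedes it below -/
import Mathlib

section
/- Let (A₁, C₁) and (A₂, C₂) be observable pairs with A₁ ∈ ℝ^{n₁×n₁}, C₁ ∈ ℝ^{q₁×n₁}, A₂ ∈ ℝ^{n₂×n₂}, C₂ ∈ ℝ^{q₂×n₂}, and let T ∈ ℝ^{q₁×q₂} have full column rank q₂. If the spectra of A₁ and A₂ are disjoint, then the pair (A, C) with block-diagonal A = diag(A₁, A₂) and C = [C₁, T·C₂] is observable. -/
/-!
Write `x = (x₁, x₂)`. Since `χ_{A₁}` and `χ_{A₂}` have no common complex root they are coprime,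
so some polynomial `p` has `p(A₁) = 1` and `p(A₂) = 0`. The outputs of `diag(A₁, A₂)` vanish for
every polynomial in place of `A^k`, and taking `X^k p` kills the second block: `C₁ A₁^k x₁ = 0`
for all `k`, so `x₁ = 0` by observability of `(A₁, C₁)`. The outputs then reduce to
`T C₂ A₂^k x₂ = 0`, and injectivity of `T` together with observability of `(A₂, C₂)` gives `x₂ = 0`.
-/

open Matrix

/-- A pair `(A, C)` is observable iff the only vector whose outputs `C A^k x`
all vanish is `x = 0` (equivalent to the rank-`n` observability matrix / PBH test). -/
def Observable {n q : Type*} [Fintype n] [Fintype q] [DecidableEq n]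
    (A : Matrix n n ℝ) (C : Matrix q n ℝ) : Prop :=
  ∀ x : n → ℝ, (∀ k : ℕ, C.mulVec ((A ^ k).mulVec x) = 0) → x = 0

open Polynomial

namespace Matrix

section Field

variable {K : Type*} [Field K] {m n : Type*} [Fintype n]

theorem mulVec_injective_of_rank_eq_card (A : Matrix m n K) (h : A.rank = Fintype.card n) :
    Function.Injective A.mulVec := by
  have hker := A.mulVecLin.finrank_range_add_finrank_ker
  rw [← rank, h, Module.finrank_fintype_fun_eq_card, add_eq_left] at hker
  exact LinearMap.ker_eq_bot.mp (Submodule.finrank_eq_zero.mp hker)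

variable [Fintype m] [DecidableEq m] [DecidableEq n]

theorem isCoprime_charpoly_of_disjoint_spectrum {L : Type*} [Field L] [IsAlgClosed L]
    [Algebra K L] {A : Matrix m m K} {B : Matrix n n K}
    (h : Disjoint (spectrum L (A.map (algebraMap K L))) (spectrum L (B.map (algebraMap K L)))) :
    IsCoprime A.charpoly B.charpoly := by
  refine (isCoprime_iff_aeval_ne_zero_of_isAlgClosed K L _ _).mpr fun a => ?_
  by_contra! hroot
  exact Set.disjoint_left.mp h
    (mem_spectrum_of_isRoot_charpoly (by simpa [charpoly_map] using hroot.1))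
    (mem_spectrum_of_isRoot_charpoly (by simpa [charpoly_map] using hroot.2))

theorem exists_aeval_eq_one_and_aeval_eq_zero_of_isCoprime_charpoly
    {A : Matrix m m K} {B : Matrix n n K} (h : IsCoprime A.charpoly B.charpoly) :
    ∃ p : K[X], aeval A p = 1 ∧ aeval B p = 0 := by
  obtain ⟨u, v, huv⟩ := h
  refine ⟨v * B.charpoly, ?_, by rw [map_mul, aeval_self_charpoly, mul_zero]⟩
  rw [eq_sub_of_add_eq' huv, map_sub, map_one, map_mul, aeval_self_charpoly, mul_zero, sub_zero]

end Field

variable {R : Type*} [CommRing R] {l m n : Type*} [Fintype m] [Fintype n]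
  [DecidableEq m] [DecidableEq n]

theorem aeval_fromBlocks_zero (A : Matrix m m R) (D : Matrix n n R) (p : R[X]) :
    aeval (fromBlocks A 0 0 D) p = fromBlocks (aeval A p) 0 0 (aeval D p) := by
  induction p using Polynomial.induction_on' with
  | add p q hp hq => simp only [map_add, hp, hq, fromBlocks_add, add_zero]
  | monomial k a =>
    simp only [aeval_monomial, Algebra.algebraMap_eq_smul_one, smul_mul_assoc, one_mul,
      fromBlocks_diagonal_pow, fromBlocks_smul, smul_zero]

theorem mulVec_aeval_mulVec_eq_zero {A : Matrix n n R} {C : Matrix l n R} {x : n → R}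
    (h : ∀ k : ℕ, C *ᵥ (A ^ k *ᵥ x) = 0) (p : R[X]) : C *ᵥ (aeval A p *ᵥ x) = 0 := by
  simp [aeval_eq_sum_range, sum_mulVec, mulVec_sum, smul_mulVec, mulVec_smul, h]

end Matrix

theorem Observable.fromBlocks_fromCols {n₁ n₂ q₁ q₂ : Type*} [Fintype n₁] [Fintype n₂]
    [Fintype q₁] [Fintype q₂] [DecidableEq n₁] [DecidableEq n₂]
    {A₁ : Matrix n₁ n₁ ℝ} {C₁ : Matrix q₁ n₁ ℝ} {A₂ : Matrix n₂ n₂ ℝ} {C₂ : Matrix q₂ n₂ ℝ}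
    {T : Matrix q₁ q₂ ℝ} (hObs₁ : Observable A₁ C₁) (hObs₂ : Observable A₂ C₂)
    (hT : Function.Injective T.mulVec) (hcop : IsCoprime A₁.charpoly A₂.charpoly) :
    Observable (fromBlocks A₁ 0 0 A₂) (fromCols C₁ (T * C₂)) := by
  intro x hx
  have hout (p : ℝ[X]) :
      C₁ *ᵥ (aeval A₁ p *ᵥ (x ∘ Sum.inl)) + T *ᵥ (C₂ *ᵥ (aeval A₂ p *ᵥ (x ∘ Sum.inr))) = 0 := by
    simpa only [aeval_fromBlocks_zero, fromBlocks_mulVec, zero_mulVec, add_zero, zero_add,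
      fromCols_mulVec_sumElim, ← mulVec_mulVec] using mulVec_aeval_mulVec_eq_zero hx p
  obtain ⟨p, hp₁, hp₂⟩ := exists_aeval_eq_one_and_aeval_eq_zero_of_isCoprime_charpoly hcop
  have hx₁ : x ∘ Sum.inl = 0 := hObs₁ _ fun k => by
    have := hout (X ^ k * p)
    rwa [_root_.map_mul, _root_.map_mul, hp₁, hp₂, mul_one, mul_zero, zero_mulVec, mulVec_zero,
      mulVec_zero, add_zero, aeval_X_pow] at this
  have hx₂ : x ∘ Sum.inr = 0 := hObs₂ _ fun k => hT <| by
    simpa only [hx₁, _root_.map_pow, aeval_X, mulVec_zero, zero_add] using hout (X ^ k)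
  ext (i | i)
  · exact congrFun hx₁ i
  · exact congrFun hx₂ i

theorem observable_block_diag
    {n₁ n₂ q₁ q₂ : ℕ}
    (A₁ : Matrix (Fin n₁) (Fin n₁) ℝ) (C₁ : Matrix (Fin q₁) (Fin n₁) ℝ)
    (A₂ : Matrix (Fin n₂) (Fin n₂) ℝ) (C₂ : Matrix (Fin q₂) (Fin n₂) ℝ)
    (T : Matrix (Fin q₁) (Fin q₂) ℝ)
    (hObs₁ : Observable A₁ C₁) (hObs₂ : Observable A₂ C₂)
    (hT : T.rank = q₂)
    (hspec : Disjoint (spectrum ℂ (A₁.map (algebraMap ℝ ℂ)))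
      (spectrum ℂ (A₂.map (algebraMap ℝ ℂ)))) :
    Observable (Matrix.fromBlocks A₁ 0 0 A₂)
      (Matrix.of fun (i : Fin q₁) (j : Fin n₁ ⊕ Fin n₂) =>
        Sum.elim (fun j₁ => C₁ i j₁) (fun j₂ => (T * C₂) i j₂) j) :=
  hObs₁.fromBlocks_fromCols hObs₂
    (T.mulVec_injective_of_rank_eq_card (hT.trans (Fintype.card_fin q₂).symm))
    (isCoprime_charpoly_of_disjoint_spectrum hspec)
end

section
/- Under the same setup, with the control law u = −k Jᵀ(q) x + Jᵀ(q) F + g(q) for k > 0, the closed loop is lossless from input F to output ẋ: with V₁ = ½ k ‖x‖² + ½ q̇ᵀ H(q) q̇, one has V̇₁ = ẋᵀ F along all trajectories, using ẋ = J(q)q̇. -/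
open Matrix

theorem transpose_jacobian_lossless_P2
    {n : ℕ}
    (f : (Fin n → ℝ) → (Fin n → ℝ))
    (J : (Fin n → ℝ) → Matrix (Fin n) (Fin n) ℝ)
    -- J(q) is the Jacobian of f, so that ẋ = J(q)q̇
    (hJ : ∀ q, HasFDerivAt f ((Matrix.mulVecLin (J q)).toContinuousLinearMap) q)
    (H : (Fin n → ℝ) → Matrix (Fin n) (Fin n) ℝ)
    (C : (Fin n → ℝ) → (Fin n → ℝ) → Matrix (Fin n) (Fin n) ℝ)
    (Hd : (Fin n → ℝ) → (Fin n → ℝ) → Matrix (Fin n) (Fin n) ℝ)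
    (hsmooth : ∀ i j, ContDiff ℝ (⊤ : ℕ∞) (fun q => H q i j))
    (hHd : ∀ q v i j, HasDerivAt (fun s : ℝ => H (q + s • v) i j) (Hd q v i j) 0)
    (hHpos : ∀ q, (H q).PosDef)
    (hskew : ∀ q v, (Hd q v - (2 : ℝ) • C q v)ᵀ = -(Hd q v - (2 : ℝ) • C q v))
    (k : ℝ) (hk : 0 < k)
    -- a trajectory of the closed loop H(q)q̈ + C(q,q̇)q̇ = −k Jᵀ(q)x + v, x = f(q)
    (q ξ ξd F : ℝ → Fin n → ℝ)
    (hq : ∀ t, HasDerivAt q (ξ t) t)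
    (hξ : ∀ t, HasDerivAt ξ (ξd t) t)
    (hdyn : ∀ t, (H (q t)).mulVec (ξd t) =
      -(C (q t) (ξ t)).mulVec (ξ t) - k • (J (q t))ᵀ.mulVec (f (q t)) + (J (q t))ᵀ.mulVec (F t)) :
    ∀ t : ℝ, HasDerivAt
      (fun t => (k / 2) * (f (q t) ⬝ᵥ f (q t))
        + (1 / 2 : ℝ) * (ξ t ⬝ᵥ (H (q t)).mulVec (ξ t)))
      ((J (q t)).mulVec (ξ t) ⬝ᵥ F t) t := by
  intro t
  -- derivative of x = f ∘ q
  have hx : HasDerivAt (fun s => f (q s)) ((J (q t)).mulVec (ξ t)) t := by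
    have := (hJ (q t)).comp_hasDerivAt t (hq t)
    exact this
  have hxi : ∀ i, HasDerivAt (fun s => f (q s) i) ((J (q t)).mulVec (ξ t) i) t := by
    intro i
    have := (ContinuousLinearMap.proj (R := ℝ) (φ := fun _ : Fin n => ℝ) i).hasFDerivAt.comp_hasDerivAt t hx
    exact this
  have hξi : ∀ i, HasDerivAt (fun s => ξ s i) (ξd t i) t := by
    intro i
    have := (ContinuousLinearMap.proj (R := ℝ) (φ := fun _ : Fin n => ℝ) i).hasFDerivAt.comp_hasDerivAt t (hξ t)
    exact this
  -- derivative of H entries along the trajectory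
  have hHij : ∀ i j, HasDerivAt (fun s => H (q s) i j) (Hd (q t) (ξ t) i j) t := by
    intro i j
    have hdiff : DifferentiableAt ℝ (fun p => H p i j) (q t) :=
      ((hsmooth i j).differentiable (by simp)).differentiableAt
    have hfd := hdiff.hasFDerivAt
    have h1 : HasDerivAt (fun s => H (q s) i j)
        (fderiv ℝ (fun p => H p i j) (q t) (ξ t)) t :=
      hfd.comp_hasDerivAt t (hq t)
    -- identify fderiv applied to ξ t with Hd via the line derivative
    have hline : HasDerivAt (fun s : ℝ => q t + s • ξ t) (ξ t) 0 := by
      have : HasDerivAt (fun s : ℝ => q t + s • ξ t) ((1 : ℝ) • ξ t) 0 :=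
        ((hasDerivAt_id (0 : ℝ)).smul_const (ξ t)).const_add (q t)
      simpa using this
    have h2 : HasDerivAt (fun s : ℝ => H (q t + s • ξ t) i j)
        (fderiv ℝ (fun p => H p i j) (q t) (ξ t)) 0 := by
      have hfd' : HasFDerivAt (fun p => H p i j) (fderiv ℝ (fun p => H p i j) (q t)) (q t + (0:ℝ) • ξ t) := by
        simpa using hfd
      have := hfd'.comp_hasDerivAt 0 hline
      exact this
    have heq : fderiv ℝ (fun p => H p i j) (q t) (ξ t) = Hd (q t) (ξ t) i j :=
      h2.unique (hHd (q t) (ξ t) i j)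
    rwa [heq] at h1
  -- abbreviations
  set X := f (q t) with hX
  set Xd := (J (q t)).mulVec (ξ t) with hXd
  set V := ξ t with hV
  set Vd := ξd t with hVd
  set M := H (q t) with hM
  set Md := Hd (q t) (ξ t) with hMd
  set Cc := C (q t) (ξ t) with hCc
  -- the raw derivative of V1
  have hraw : HasDerivAt
      (fun s => (k / 2) * (f (q s) ⬝ᵥ f (q s))
        + (1 / 2 : ℝ) * (ξ s ⬝ᵥ (H (q s)).mulVec (ξ s)))
      ((k / 2) * (∑ i, (Xd i * X i + X i * Xd i))
        + (1 / 2 : ℝ) * (∑ i, (Vd i * (M.mulVec V) i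
            + V i * (∑ j, (Md i j * V j + M i j * Vd j))))) t := by
    apply HasDerivAt.add
    · apply HasDerivAt.const_mul
      simp only [dotProduct]
      exact HasDerivAt.fun_sum fun i _ => (hxi i).mul (hxi i)
    · apply HasDerivAt.const_mul
      simp only [dotProduct, Matrix.mulVec]
      apply HasDerivAt.fun_sum
      intro i _
      exact (hξi i).mul (HasDerivAt.fun_sum fun j _ => (hHij i j).mul (hξi j))
  -- symmetry of M
  have hsym : Mᵀ = M := by
    have h := (hHpos (q t)).isHermitian.eq
    simpa using h
  -- the skew-symmetry identity
  have hA : V ⬝ᵥ (Md - (2:ℝ) • Cc) *ᵥ V = 0 := by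
    set A := Md - (2:ℝ) • Cc with hAdef
    have hAs : Aᵀ = -A := hskew (q t) (ξ t)
    have h1 : V ⬝ᵥ A *ᵥ V = (Aᵀ *ᵥ V) ⬝ᵥ V := by
      rw [dotProduct_mulVec, ← vecMul_transpose, transpose_transpose]
    have h2 : (Aᵀ *ᵥ V) ⬝ᵥ V = -(V ⬝ᵥ A *ᵥ V) := by
      rw [hAs, neg_mulVec, neg_dotProduct, dotProduct_comm]
    have := h1.trans h2
    linarith
  have f2 : V ⬝ᵥ Md *ᵥ V = 2 * (V ⬝ᵥ Cc *ᵥ V) := by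
    have h := hA
    rw [sub_mulVec, smul_mulVec, dotProduct_sub, dotProduct_smul] at h
    simp only [smul_eq_mul] at h
    linarith
  have hv : V ᵥ* M = M *ᵥ V := by
    conv_lhs => rw [← hsym]
    exact vecMul_transpose M V
  have f1 : Vd ⬝ᵥ M *ᵥ V = V ⬝ᵥ M *ᵥ Vd := by
    rw [dotProduct_mulVec V M Vd, hv, dotProduct_comm]
  have hJdot : ∀ w : Fin n → ℝ, V ⬝ᵥ (J (q t))ᵀ *ᵥ w = Xd ⬝ᵥ w := by
    intro w
    rw [dotProduct_mulVec, vecMul_transpose]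
  have f3 : V ⬝ᵥ M *ᵥ Vd = -(V ⬝ᵥ Cc *ᵥ V) - k * (Xd ⬝ᵥ X) + Xd ⬝ᵥ F t := by
    have hdt : M *ᵥ Vd = -(Cc *ᵥ V) - k • ((J (q t))ᵀ *ᵥ X) + (J (q t))ᵀ *ᵥ F t := hdyn t
    rw [hdt, dotProduct_add, dotProduct_sub, dotProduct_neg, dotProduct_smul, smul_eq_mul,
      hJdot, hJdot]
  -- sum simplifications
  have hS1 : ∑ i, (Xd i * X i + X i * Xd i) = 2 * (Xd ⬝ᵥ X) := by
    rw [Finset.sum_add_distrib]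
    simp [dotProduct, two_mul, mul_comm]
  have hS2 : ∑ i, (Vd i * (M *ᵥ V) i + V i * ∑ j, (Md i j * V j + M i j * Vd j))
      = Vd ⬝ᵥ (M *ᵥ V) + (V ⬝ᵥ Md *ᵥ V + V ⬝ᵥ M *ᵥ Vd) := by
    simp [dotProduct, Matrix.mulVec, Finset.sum_add_distrib, Finset.mul_sum, mul_add]
  convert hraw using 1
  rw [hS1, hS2, f1, f2, f3]
  ring
end

section
/- Let S ∈ ℝ^{p×p}, A ∈ ℝ^{ℓ×ℓ}, B ∈ ℝ^{ℓ×m}, D ∈ ℝ^{m×p}, and Σ ∈ ℝ^{ℓ×p} satisfy ΣS = AΣ and BᵀΣ + D = 0. Let w solve ẇ = Sw and η solve η̇ = Aη − Bu for some input u. Then the error η̃ = η − Σw satisfies η̃̇ = Aη̃ − Bu, and the mismatch signal d̃ := Dw + Bᵀη equals Bᵀη̃. -/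
/-!
Subtracting the steady state `Σ w` from `η` removes the exosystem exactly: the regulator equation
`Σ S = A Σ` makes `Σ w` a trajectory of the unforced dynamics `ẋ = A x`, so by linearity the error
`η - Σ w` obeys the same forced equation as `η`; and `D = -Bᵀ Σ` turns `D w + Bᵀ η` into `Bᵀ (η - Σ w)`.
-/

open Matrix

namespace Matrix

variable {m n : Type*} [Fintype m] [Fintype n]

theorem mulVec_add_mulVec_eq_mulVec_sub {R : Type*} [CommRing R] {l : Type*} {C : Matrix l m R}
    {Sig : Matrix m n R} {D : Matrix l n R} (h : C * Sig + D = 0) (w : n → R) (η : m → R) :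
    D *ᵥ w + C *ᵥ η = C *ᵥ (η - Sig *ᵥ w) := by
  rw [eq_neg_of_add_eq_zero_right h, neg_mulVec, mulVec_sub, mulVec_mulVec]
  abel

variable {𝕜 : Type*} [NontriviallyNormedField 𝕜] [CompleteSpace 𝕜]

theorem hasDerivAt_mulVec (M : Matrix m n 𝕜) {x : 𝕜 → n → 𝕜} {x' : n → 𝕜} {t : 𝕜}
    (hx : HasDerivAt x x' t) : HasDerivAt (fun s => M *ᵥ x s) (M *ᵥ x') t :=
  (mulVecLin M).toContinuousLinearMap.hasFDerivAt.comp_hasDerivAt t hx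

theorem hasDerivAt_sub_mulVec_of_mul_eq_mul {S : Matrix n n 𝕜}
    {A : Matrix m m 𝕜} {Sig : Matrix m n 𝕜} (hSig : Sig * S = A * Sig) {w : 𝕜 → n → 𝕜}
    {η : 𝕜 → m → 𝕜} {f : m → 𝕜} {t : 𝕜} (hw : HasDerivAt w (S *ᵥ w t) t)
    (hη : HasDerivAt η (A *ᵥ η t - f) t) :
    HasDerivAt (fun s => η s - Sig *ᵥ w s) (A *ᵥ (η t - Sig *ᵥ w t) - f) t := by
  have hSigw : HasDerivAt (fun s => Sig *ᵥ w s) (A *ᵥ (Sig *ᵥ w t)) t := by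
    simpa only [mulVec_mulVec, hSig] using Sig.hasDerivAt_mulVec hw
  refine (hη.sub hSigw).congr_deriv ?_
  rw [mulVec_sub]
  abel

end Matrix

theorem internal_model_error_dynamics
    {p ℓ m : ℕ}
    (S : Matrix (Fin p) (Fin p) ℝ) (A : Matrix (Fin ℓ) (Fin ℓ) ℝ)
    (B : Matrix (Fin ℓ) (Fin m) ℝ) (D : Matrix (Fin m) (Fin p) ℝ)
    (Sig : Matrix (Fin ℓ) (Fin p) ℝ)
    (hreg1 : Sig * S = A * Sig) (hreg2 : Bᵀ * Sig + D = 0)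
    (w : ℝ → Fin p → ℝ) (η : ℝ → Fin ℓ → ℝ) (u : ℝ → Fin m → ℝ)
    (hw : ∀ t, HasDerivAt w (S.mulVec (w t)) t)
    (hη : ∀ t, HasDerivAt η (A.mulVec (η t) - B.mulVec (u t)) t) :
    (∀ t, HasDerivAt (fun t => η t - Sig.mulVec (w t))
        (A.mulVec (η t - Sig.mulVec (w t)) - B.mulVec (u t)) t) ∧
    (∀ t, D.mulVec (w t) + Bᵀ.mulVec (η t) = Bᵀ.mulVec (η t - Sig.mulVec (w t))) :=
  ⟨fun t => hasDerivAt_sub_mulVec_of_mul_eq_mul hreg1 (hw t) (hη t),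
    fun t => mulVec_add_mulVec_eq_mulVec_sub hreg2 (w t) (η t)⟩
end

section
/- Consider the velocity-free closed loop: ζ̄̇ = Aζ̄ − BΓ(q)ξ, χ̇ = −h(χ + hq), q̇ = ξ, H(q)ξ̇ = −k_p Jᵀ(q)(f(q) − x_d) − k_d(χ + hq) − C(q,ξ)ξ + Γᵀ(q)Bᵀζ̄, with A skew-symmetric, H positive definite, Ḣ − 2C skew-symmetric, k_p, k_d, h > 0. Then V̄ = ½‖ζ̄‖² + ½ k_d h^{−1} ‖χ + hq‖² + ½ k_p ‖f(q) − x_d‖² + ½ ξᵀ H(q) ξ satisfies V̄̇ = −k_d ‖χ + hq‖² along all trajectories. -/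
open Matrix

private lemma hasDerivAt_dot {n : ℕ} {u v : ℝ → Fin n → ℝ} {u' v' : Fin n → ℝ} {t : ℝ}
    (hu : HasDerivAt u u' t) (hv : HasDerivAt v v' t) :
    HasDerivAt (fun t => u t ⬝ᵥ v t) (u' ⬝ᵥ v t + u t ⬝ᵥ v') t := by
  have h1 : ∀ i : Fin n, HasDerivAt (fun t => u t i * v t i) (u' i * v t i + u t i * v' i) t :=
    fun i => ((hasDerivAt_pi.mp hu) i).mul ((hasDerivAt_pi.mp hv) i)
  simpa [dotProduct, Finset.sum_add_distrib] using
    HasDerivAt.fun_sum (fun i (_ : i ∈ Finset.univ) => h1 i)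

private lemma skew_dot {n : ℕ} (M : Matrix (Fin n) (Fin n) ℝ) (hM : Mᵀ = -M)
    (x : Fin n → ℝ) : x ⬝ᵥ M.mulVec x = 0 := by
  have h1 : x ⬝ᵥ M *ᵥ x = Mᵀ *ᵥ x ⬝ᵥ x := by
    rw [Matrix.dotProduct_mulVec, Matrix.mulVec_transpose]
  rw [hM, Matrix.neg_mulVec] at h1
  have h2 : M *ᵥ x ⬝ᵥ x = x ⬝ᵥ M *ᵥ x := dotProduct_comm _ _
  simp only [neg_dotProduct] at h1
  linarith [h1, h2]

theorem velocity_free_lyapunov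
    {n ℓ : ℕ}
    (f : (Fin n → ℝ) → (Fin n → ℝ))
    (J : (Fin n → ℝ) → Matrix (Fin n) (Fin n) ℝ)
    (hJ : ∀ q, HasFDerivAt f ((Matrix.mulVecLin (J q)).toContinuousLinearMap) q)
    (H : (Fin n → ℝ) → Matrix (Fin n) (Fin n) ℝ)
    (C : (Fin n → ℝ) → (Fin n → ℝ) → Matrix (Fin n) (Fin n) ℝ)
    (Hd : (Fin n → ℝ) → (Fin n → ℝ) → Matrix (Fin n) (Fin n) ℝ)
    (hsmooth : ∀ i j, ContDiff ℝ (⊤ : ℕ∞) (fun q => H q i j))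
    (hHd : ∀ q v i j, HasDerivAt (fun s : ℝ => H (q + s • v) i j) (Hd q v i j) 0)
    (hHpos : ∀ q, (H q).PosDef)
    (hskewHC : ∀ q v, (Hd q v - (2 : ℝ) • C q v)ᵀ = -(Hd q v - (2 : ℝ) • C q v))
    (A : Matrix (Fin ℓ) (Fin ℓ) ℝ) (hA : Aᵀ = -A)
    (B : Matrix (Fin ℓ) (Fin n ⊕ Fin n) ℝ)
    (kp kd h : ℝ) (hkp : 0 < kp) (hkd : 0 < kd) (hh : 0 < h)
    (xd : Fin n → ℝ)
    (Γ : (Fin n → ℝ) → Matrix (Fin n ⊕ Fin n) (Fin n) ℝ)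
    (hΓ : ∀ q, Γ q = Matrix.fromRows 1 (J q))
    -- a trajectory of the velocity-free closed loop
    (ζb : ℝ → Fin ℓ → ℝ) (χ q ξ ξd : ℝ → Fin n → ℝ)
    (hζb : ∀ t, HasDerivAt ζb
      (A.mulVec (ζb t) - (B * Γ (q t)).mulVec (ξ t)) t)
    (hχ : ∀ t, HasDerivAt χ (-h • (χ t + h • q t)) t)
    (hq : ∀ t, HasDerivAt q (ξ t) t)
    (hξ : ∀ t, HasDerivAt ξ (ξd t) t)
    (hdyn : ∀ t, (H (q t)).mulVec (ξd t) =
      -kp • (J (q t))ᵀ.mulVec (f (q t) - xd) - kd • (χ t + h • q t)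
        - (C (q t) (ξ t)).mulVec (ξ t) + ((Γ (q t))ᵀ * Bᵀ).mulVec (ζb t)) :
    ∀ t : ℝ, HasDerivAt
      (fun t => (1 / 2 : ℝ) * (ζb t ⬝ᵥ ζb t)
        + (kd / (2 * h)) * ((χ t + h • q t) ⬝ᵥ (χ t + h • q t))
        + (kp / 2) * ((f (q t) - xd) ⬝ᵥ (f (q t) - xd))
        + (1 / 2 : ℝ) * (ξ t ⬝ᵥ (H (q t)).mulVec (ξ t)))
      (-kd * ((χ t + h • q t) ⬝ᵥ (χ t + h • q t))) t := by
  intro t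
  -- entrywise derivative of H along the trajectory
  have hHent : ∀ i j, HasDerivAt (fun t => H (q t) i j) (Hd (q t) (ξ t) i j) t := by
    intro i j
    have hgd : Differentiable ℝ (fun p => H p i j) := (hsmooth i j).differentiable (by simp)
    have hfd : HasFDerivAt (fun p => H p i j) (fderiv ℝ (fun p => H p i j) (q t)) (q t) :=
      (hgd (q t)).hasFDerivAt
    have hs : HasDerivAt (fun s : ℝ => q t + s • ξ t) (ξ t) 0 := by
      simpa using ((hasDerivAt_id (0:ℝ)).smul_const (ξ t)).const_add (q t)
    have e0 : q t + (0:ℝ) • ξ t = q t := by simp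
    have hfd' : HasFDerivAt (fun p => H p i j) (fderiv ℝ (fun p => H p i j) (q t))
        (q t + (0:ℝ) • ξ t) := by rw [e0]; exact hfd
    have hline : HasDerivAt (fun s : ℝ => H (q t + s • ξ t) i j)
        (fderiv ℝ (fun p => H p i j) (q t) (ξ t)) 0 := by have := hfd'.comp_hasDerivAt 0 hs; exact this
    have huniq : Hd (q t) (ξ t) i j = fderiv ℝ (fun p => H p i j) (q t) (ξ t) :=
      (hHd (q t) (ξ t) i j).unique hline
    rw [huniq]
    exact hfd.comp_hasDerivAt t (hq t)
  -- derivative of t ↦ H(q t) *ᵥ ξ t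
  have hHmv : HasDerivAt (fun t => (H (q t)).mulVec (ξ t))
      ((Hd (q t) (ξ t)).mulVec (ξ t) + (H (q t)).mulVec (ξd t)) t := by
    rw [hasDerivAt_pi]
    intro i
    have h1 : ∀ j : Fin n, HasDerivAt (fun t => H (q t) i j * ξ t j)
        (Hd (q t) (ξ t) i j * ξ t j + H (q t) i j * ξd t j) t :=
      fun j => (hHent i j).mul ((hasDerivAt_pi.mp (hξ t)) j)
    simpa [Matrix.mulVec, dotProduct, Finset.sum_add_distrib] using
      HasDerivAt.fun_sum (fun j (_ : j ∈ Finset.univ) => h1 j)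
  have hw : HasDerivAt (fun t => χ t + h • q t)
      (-h • (χ t + h • q t) + h • ξ t) t := (hχ t).add ((hq t).const_smul h)
  have hfq : HasDerivAt (fun t => f (q t)) ((J (q t)).mulVec (ξ t)) t := by
    exact (hJ (q t)).comp_hasDerivAt t (hq t)
  have he : HasDerivAt (fun t => f (q t) - xd) ((J (q t)).mulVec (ξ t)) t :=
    hfq.sub_const xd
  have hV : HasDerivAt
      (fun t => (1 / 2 : ℝ) * (ζb t ⬝ᵥ ζb t)
        + (kd / (2 * h)) * ((χ t + h • q t) ⬝ᵥ (χ t + h • q t))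
        + (kp / 2) * ((f (q t) - xd) ⬝ᵥ (f (q t) - xd))
        + (1 / 2 : ℝ) * (ξ t ⬝ᵥ (H (q t)).mulVec (ξ t)))
      ((1 / 2 : ℝ) * ((A.mulVec (ζb t) - (B * Γ (q t)).mulVec (ξ t)) ⬝ᵥ ζb t
          + ζb t ⬝ᵥ (A.mulVec (ζb t) - (B * Γ (q t)).mulVec (ξ t)))
        + (kd / (2 * h)) * ((-h • (χ t + h • q t) + h • ξ t) ⬝ᵥ (χ t + h • q t)
          + (χ t + h • q t) ⬝ᵥ (-h • (χ t + h • q t) + h • ξ t))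
        + (kp / 2) * ((J (q t)).mulVec (ξ t) ⬝ᵥ (f (q t) - xd)
          + (f (q t) - xd) ⬝ᵥ (J (q t)).mulVec (ξ t))
        + (1 / 2 : ℝ) * (ξd t ⬝ᵥ (H (q t)).mulVec (ξ t)
          + ξ t ⬝ᵥ ((Hd (q t) (ξ t)).mulVec (ξ t) + (H (q t)).mulVec (ξd t)))) t :=
    ((((hasDerivAt_dot (hζb t) (hζb t)).const_mul (1/2 : ℝ)).add
      ((hasDerivAt_dot hw hw).const_mul (kd / (2*h)))).add
      ((hasDerivAt_dot he he).const_mul (kp / 2))).add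
      ((hasDerivAt_dot (hξ t) hHmv).const_mul (1/2 : ℝ))
  -- scalar identities
  have hHsym : (H (q t))ᵀ = H (q t) := (hHpos (q t)).1
  have e1 : ζb t ⬝ᵥ A *ᵥ ζb t = 0 := skew_dot A hA (ζb t)
  have e2 : ξ t ⬝ᵥ (Hd (q t) (ξ t)) *ᵥ ξ t = 2 * (ξ t ⬝ᵥ (C (q t) (ξ t)) *ᵥ ξ t) := by
    have := skew_dot _ (hskewHC (q t) (ξ t)) (ξ t)
    simp only [Matrix.sub_mulVec, Matrix.smul_mulVec, dotProduct_sub,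
      dotProduct_smul, smul_eq_mul] at this
    linarith
  have e3 : ξd t ⬝ᵥ (H (q t)) *ᵥ ξ t = ξ t ⬝ᵥ (H (q t)) *ᵥ ξd t := by
    have hsw : (H (q t)) *ᵥ ξd t = ξd t ᵥ* H (q t) := by
      conv_lhs => rw [← hHsym]
      exact Matrix.mulVec_transpose _ _
    rw [Matrix.dotProduct_mulVec, ← hsw, dotProduct_comm]
  have e4 : ξ t ⬝ᵥ ((Γ (q t))ᵀ * Bᵀ) *ᵥ ζb t = ζb t ⬝ᵥ (B * Γ (q t)) *ᵥ ξ t := by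
    rw [show (Γ (q t))ᵀ * Bᵀ = (B * Γ (q t))ᵀ from (Matrix.transpose_mul B (Γ (q t))).symm,
      Matrix.dotProduct_mulVec, Matrix.vecMul_transpose, dotProduct_comm]
  have e5 : (J (q t)) *ᵥ ξ t ⬝ᵥ (f (q t) - xd) = ξ t ⬝ᵥ (J (q t))ᵀ *ᵥ (f (q t) - xd) := by
    rw [Matrix.dotProduct_mulVec, Matrix.vecMul_transpose]
  have e6 : ξ t ⬝ᵥ (H (q t)) *ᵥ ξd t =
      -kp * (ξ t ⬝ᵥ (J (q t))ᵀ *ᵥ (f (q t) - xd)) - kd * (ξ t ⬝ᵥ (χ t + h • q t))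
        - ξ t ⬝ᵥ (C (q t) (ξ t)) *ᵥ ξ t + ζb t ⬝ᵥ (B * Γ (q t)) *ᵥ ξ t := by
    rw [hdyn t]
    simp only [dotProduct_sub, dotProduct_add, dotProduct_smul,
      smul_eq_mul, e4]
  have c1 : (A *ᵥ ζb t - (B * Γ (q t)) *ᵥ ξ t) ⬝ᵥ ζb t
      = ζb t ⬝ᵥ (A *ᵥ ζb t - (B * Γ (q t)) *ᵥ ξ t) := dotProduct_comm _ _
  have c2 : (-h • (χ t + h • q t) + h • ξ t) ⬝ᵥ (χ t + h • q t)
      = (χ t + h • q t) ⬝ᵥ (-h • (χ t + h • q t) + h • ξ t) := dotProduct_comm _ _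
  have c3 : (f (q t) - xd) ⬝ᵥ (J (q t)) *ᵥ ξ t
      = (J (q t)) *ᵥ ξ t ⬝ᵥ (f (q t) - xd) := dotProduct_comm _ _
  have c4 : ξ t ⬝ᵥ (χ t + h • q t) = (χ t + h • q t) ⬝ᵥ ξ t := dotProduct_comm _ _
  have d1 : (χ t + h • q t) ⬝ᵥ (-h • (χ t + h • q t) + h • ξ t)
      = -h * ((χ t + h • q t) ⬝ᵥ (χ t + h • q t)) + h * ((χ t + h • q t) ⬝ᵥ ξ t) := by
    rw [dotProduct_add, dotProduct_smul, dotProduct_smul]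
    simp [smul_eq_mul]
  have d2 : ζb t ⬝ᵥ (A *ᵥ ζb t - (B * Γ (q t)) *ᵥ ξ t)
      = ζb t ⬝ᵥ A *ᵥ ζb t - ζb t ⬝ᵥ (B * Γ (q t)) *ᵥ ξ t := dotProduct_sub _ _ _
  have d3 : ξ t ⬝ᵥ ((Hd (q t) (ξ t)) *ᵥ ξ t + (H (q t)) *ᵥ ξd t)
      = ξ t ⬝ᵥ (Hd (q t) (ξ t)) *ᵥ ξ t + ξ t ⬝ᵥ (H (q t)) *ᵥ ξd t :=
    dotProduct_add _ _ _
  have hne : h ≠ 0 := ne_of_gt hh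
  have key : (1 / 2 : ℝ) * ((A.mulVec (ζb t) - (B * Γ (q t)).mulVec (ξ t)) ⬝ᵥ ζb t
          + ζb t ⬝ᵥ (A.mulVec (ζb t) - (B * Γ (q t)).mulVec (ξ t)))
        + (kd / (2 * h)) * ((-h • (χ t + h • q t) + h • ξ t) ⬝ᵥ (χ t + h • q t)
          + (χ t + h • q t) ⬝ᵥ (-h • (χ t + h • q t) + h • ξ t))
        + (kp / 2) * ((J (q t)).mulVec (ξ t) ⬝ᵥ (f (q t) - xd)
          + (f (q t) - xd) ⬝ᵥ (J (q t)).mulVec (ξ t))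
        + (1 / 2 : ℝ) * (ξd t ⬝ᵥ (H (q t)).mulVec (ξ t)
          + ξ t ⬝ᵥ ((Hd (q t) (ξ t)).mulVec (ξ t) + (H (q t)).mulVec (ξd t)))
      = -kd * ((χ t + h • q t) ⬝ᵥ (χ t + h • q t)) := by
    rw [c1, c2, c3, d2, d3, e1, e2, e3, e5, e6, d1, c4]
    field_simp
    ring
  rw [← key]
  exact hV
end
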